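/- arXiv:2410.06969 — 4 statements merged into one kernel-verified Lean document; each statement's English description precedes it below -/
import Mathlib

section
/- Assume w(e) = 1 for every hyperedge e ∈ E (unit weights, so d(u) = |{e ∈ E : u ∈ e}|). For every complex vector x = a + i·b ∈ ℂ^E with a, b ∈ ℝ^E, the quadratic form x* 𝕃_N x equals (1/2) Σ_{u ∈ V} (1/d(u)) Σ_{i,j ∈ E} [ ((a_i/√δ(i) − a_j/√δ(j))² + (b_i/√δ(i) − b_j/√δ(j))²)·𝟙[u ∈ H(i)∩H(j) or u ∈ T(i)∩T(j)] + ((a_i/√δ(i) − b_j/√δ(j))² + (a_j/√δ(j) + b_i/√δ(i))²)·𝟙[u ∈ H(i)∩T(j)] + ((a_i/√δ(i) + b_j/√δ(j))² + (a_j/√δ(j) − b_i/√δ(i))²)·𝟙[u ∈ T(i)∩H(j)] ], where 𝟙 denotes the indicator function. -/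
open Matrix Finset

variable {V E : Type*}

/-- The complex incidence matrix of a directed hypergraph with head sets `Hd` and
tail sets `Tl`: `1` on heads, `-i` on tails, `0` otherwise. -/
noncomputable def incB [DecidableEq V] (Hd Tl : E → Finset V) : Matrix V E ℂ :=
  Matrix.of fun v e => if v ∈ Hd e then 1 else if v ∈ Tl e then -Complex.I else 0

/-- The (weighted) degree of a vertex: sum of the weights of the hyperedges containing it. -/
noncomputable def vdeg [Fintype E] [DecidableEq V] (Hd Tl : E → Finset V) (w : E → ℝ)
    (u : V) : ℝ :=
  ∑ e ∈ Finset.univ.filter (fun e => u ∈ Hd e ∪ Tl e), w e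

/-- The degree (cardinality) of a hyperedge. -/
def edeg [DecidableEq V] (Hd Tl : E → Finset V) (e : E) : ℕ :=
  (Hd e ∪ Tl e).card

/-- The normalized Signless Directed Line-Graph Laplacian
`Q̄_N = D_e^{-1/2} W^{1/2} B* D_v^{-1} B W^{1/2} D_e^{-1/2}`. -/
noncomputable def QN [Fintype V] [Fintype E] [DecidableEq V] [DecidableEq E]
    (Hd Tl : E → Finset V) (w : E → ℝ) : Matrix E E ℂ :=
  Matrix.diagonal (fun e => (((Real.sqrt (edeg Hd Tl e : ℝ))⁻¹ : ℝ) : ℂ)) *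
    Matrix.diagonal (fun e => ((Real.sqrt (w e) : ℝ) : ℂ)) * (incB Hd Tl)ᴴ *
    Matrix.diagonal (fun u => (((vdeg Hd Tl w u)⁻¹ : ℝ) : ℂ)) * incB Hd Tl *
    Matrix.diagonal (fun e => ((Real.sqrt (w e) : ℝ) : ℂ)) *
    Matrix.diagonal (fun e => (((Real.sqrt (edeg Hd Tl e : ℝ))⁻¹ : ℝ) : ℂ))

/-- The Directed Line Graph Laplacian `𝕃_N = I - Q̄_N`. -/
noncomputable def LN [Fintype V] [Fintype E] [DecidableEq V] [DecidableEq E]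
    (Hd Tl : E → Finset V) (w : E → ℝ) : Matrix E E ℂ :=
  1 - QN Hd Tl w

/-! Put `y e = x e / √δ(e)` and `z_u(e) = B(u,e) y e`. Since `Q̄_N = Mᴴ D_v⁻¹ M` with
`M = B D_e^{-1/2}`, the form `x* Q̄_N x` is `∑_u ‖∑_e z_u(e)‖² / d(u)`, while
`‖x e‖² = δ(e) ‖y e‖² = ∑_{u ∈ e} ‖z_u(e)‖²` because `|B(u,e)| = 1` on `e`. At each vertex the
Lagrange identity `∑_{i,j} ‖z_i - z_j‖² = 2n ∑_i ‖z_i‖² - 2 ‖∑_i z_i‖²` over the `n = d(u)`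
hyperedges at `u` turns `x* 𝕃_N x` into the double sum, and for `u ∈ i ∩ j` the three indicator
terms are exactly `‖z_u(i) - z_u(j)‖²`: a tail multiplies `a + ib` by `-i`, giving `b - ia`. -/

theorem sum_sum_norm_sub_sq {ι F : Type*} [NormedAddCommGroup F] [InnerProductSpace ℝ F]
    (s : Finset ι) (z : ι → F) :
    ∑ i ∈ s, ∑ j ∈ s, ‖z i - z j‖ ^ 2 = 2 * #s * ∑ i ∈ s, ‖z i‖ ^ 2 - 2 * ‖∑ i ∈ s, z i‖ ^ 2 := by
  have hsum : ‖∑ i ∈ s, z i‖ ^ 2 = ∑ i ∈ s, ∑ j ∈ s, inner ℝ (z i) (z j) := by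
    rw [← real_inner_self_eq_norm_sq, sum_inner]
    simp only [inner_sum]
  simp only [norm_sub_sq_real, sum_add_distrib, sum_sub_distrib, sum_const, nsmul_eq_mul,
    ← mul_sum, hsum]
  ring

theorem inv_card_mul_sum_sum_norm_sub_sq {ι F : Type*} [NormedAddCommGroup F]
    [InnerProductSpace ℝ F] (s : Finset ι) (z : ι → F) :
    (#s : ℝ)⁻¹ * ∑ i ∈ s, ∑ j ∈ s, ‖z i - z j‖ ^ 2 =
      2 * (∑ i ∈ s, ‖z i‖ ^ 2 - (#s : ℝ)⁻¹ * ‖∑ i ∈ s, z i‖ ^ 2) := by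
  rcases s.eq_empty_or_nonempty with rfl | hs
  · simp
  have : (#s : ℝ) ≠ 0 := by exact_mod_cast hs.card_ne_zero
  rw [sum_sum_norm_sub_sq]
  field_simp

theorem dotProduct_conjTranspose_mul_diagonal_mul_mulVec {m n : Type*} [Fintype m] [Fintype n]
    [DecidableEq m] (A : Matrix m n ℂ) (c : m → ℝ) (x : n → ℂ) :
    star x ⬝ᵥ ((Aᴴ * diagonal (fun i => (c i : ℂ)) * A) *ᵥ x) =
      ((∑ i, c i * ‖(A *ᵥ x) i‖ ^ 2 : ℝ) : ℂ) := by
  rw [Matrix.mul_assoc, ← mulVec_mulVec, dotProduct_mulVec, ← star_mulVec, ← mulVec_mulVec]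
  push_cast
  refine sum_congr rfl fun i _ => ?_
  rw [mulVec_diagonal, Pi.star_apply, ← Complex.conj_mul', RCLike.star_def]
  ring

theorem QN_eq_conjTranspose_mul_diagonal_mul [Fintype V] [Fintype E] [DecidableEq V]
    [DecidableEq E] (Hd Tl : E → Finset V) (w : E → ℝ) :
    QN Hd Tl w = (incB Hd Tl * diagonal fun e => ((√(w e) / √(edeg Hd Tl e : ℝ) : ℝ) : ℂ))ᴴ *
      diagonal (fun u => (((vdeg Hd Tl w u)⁻¹ : ℝ) : ℂ)) *
      (incB Hd Tl * diagonal fun e => ((√(w e) / √(edeg Hd Tl e : ℝ) : ℝ) : ℂ)) := by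
  simp only [QN, conjTranspose_mul, diagonal_conjTranspose, Matrix.mul_assoc, diagonal_mul_diagonal]
  congr 2
  · funext e
    simp [div_eq_mul_inv, mul_comm]
  · congr 4
    funext e
    push_cast
    ring

theorem star_dotProduct_QN_mulVec [Fintype V] [Fintype E] [DecidableEq V] [DecidableEq E]
    (Hd Tl : E → Finset V) (w : E → ℝ) (x : E → ℂ) :
    star x ⬝ᵥ (QN Hd Tl w *ᵥ x) = ((∑ u, (vdeg Hd Tl w u)⁻¹ *
      ‖(incB Hd Tl *ᵥ fun e => ((√(w e) / √(edeg Hd Tl e : ℝ) : ℝ) : ℂ) * x e) u‖ ^ 2 : ℝ) : ℂ) := by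
  rw [QN_eq_conjTranspose_mul_diagonal_mul, dotProduct_conjTranspose_mul_diagonal_mul_mulVec,
    ← mulVec_mulVec, funext (mulVec_diagonal _ x)]

theorem star_dotProduct_self_eq {n : Type*} [Fintype n] (x : n → ℂ) :
    star x ⬝ᵥ x = ((∑ i, ‖x i‖ ^ 2 : ℝ) : ℂ) := by
  push_cast
  exact sum_congr rfl fun i _ => by rw [Pi.star_apply, ← Complex.conj_mul', RCLike.star_def]

theorem star_dotProduct_LN_mulVec [Fintype V] [Fintype E] [DecidableEq V] [DecidableEq E]
    (Hd Tl : E → Finset V) (w : E → ℝ) (x : E → ℂ) :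
    star x ⬝ᵥ (LN Hd Tl w *ᵥ x) = ((∑ e, ‖x e‖ ^ 2 - ∑ u, (vdeg Hd Tl w u)⁻¹ *
      ‖(incB Hd Tl *ᵥ fun e => ((√(w e) / √(edeg Hd Tl e : ℝ) : ℝ) : ℂ) * x e) u‖ ^ 2 : ℝ) : ℂ) := by
  rw [LN, sub_mulVec, one_mulVec, dotProduct_sub, star_dotProduct_QN_mulVec,
    star_dotProduct_self_eq, Complex.ofReal_sub]

section Incidence

variable [DecidableEq V] (Hd Tl : E → Finset V) {u : V} {e : E}

theorem incB_apply_of_notMem (h : u ∉ Hd e ∪ Tl e) : incB Hd Tl u e = 0 := by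
  simp_all [incB]

theorem norm_incB_apply (h : u ∈ Hd e ∪ Tl e) : ‖incB Hd Tl u e‖ = 1 := by
  by_cases hH : u ∈ Hd e
  · simp [incB, hH]
  · simp [incB, hH, (mem_union.mp h).resolve_left hH]

theorem pair_terms_eq_sq_norm_sub {i j : E} (hi : Disjoint (Hd i) (Tl i))
    (hj : Disjoint (Hd j) (Tl j)) (ai bi aj bj : ℝ) (u : V) :
    ((if u ∈ Hd i ∩ Hd j ∨ u ∈ Tl i ∩ Tl j then (ai - aj) ^ 2 + (bi - bj) ^ 2 else 0) +
      (if u ∈ Hd i ∩ Tl j then (ai - bj) ^ 2 + (aj + bi) ^ 2 else 0) +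
      (if u ∈ Tl i ∩ Hd j then (ai + bj) ^ 2 + (aj - bi) ^ 2 else 0)) =
    if u ∈ Hd i ∪ Tl i ∧ u ∈ Hd j ∪ Tl j then
      ‖incB Hd Tl u i * (ai + bi * Complex.I) - incB Hd Tl u j * (aj + bj * Complex.I)‖ ^ 2
    else 0 := by
  have hi' := disjoint_left.mp hi
  have hj' := disjoint_left.mp hj
  by_cases hHi : u ∈ Hd i <;> by_cases hTi : u ∈ Tl i <;> by_cases hHj : u ∈ Hd j <;>
    by_cases hTj : u ∈ Tl j <;>
    simp_all [incB, Complex.sq_norm, Complex.normSq_apply] <;> ring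

variable [Fintype E]

def incidentEdges (u : V) : Finset E :=
  univ.filter fun e => u ∈ Hd e ∪ Tl e

theorem vdeg_one (u : V) : vdeg Hd Tl (fun _ => 1) u = #(incidentEdges Hd Tl u) := by
  simp [vdeg, incidentEdges]

theorem mulVec_incB_apply (y : E → ℂ) (u : V) :
    (incB Hd Tl *ᵥ y) u = ∑ e ∈ incidentEdges Hd Tl u, incB Hd Tl u e * y e := by
  rw [incidentEdges, sum_filter]
  refine sum_congr rfl fun e _ => ?_
  split_ifs with h
  · rfl
  · simp only [incB_apply_of_notMem Hd Tl h, zero_mul]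

theorem sum_sum_incidentEdges [Fintype V] {M : Type*} [AddCommMonoid M] (f : E → M) :
    ∑ u, ∑ e ∈ incidentEdges Hd Tl u, f e = ∑ e, edeg Hd Tl e • f e := by
  simp only [incidentEdges, sum_filter]
  rw [sum_comm]
  refine sum_congr rfl fun e _ => ?_
  rw [← sum_filter, sum_const, filter_univ_mem, edeg]

theorem sum_edeg_mul_sq_norm_sub_sum_inv_mul_sq_norm_mulVec_incB [Fintype V] (y : E → ℂ) :
    ∑ e, (edeg Hd Tl e : ℝ) * ‖y e‖ ^ 2 -
        ∑ u, (#(incidentEdges Hd Tl u) : ℝ)⁻¹ * ‖(incB Hd Tl *ᵥ y) u‖ ^ 2 =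
      1 / 2 * ∑ u, 1 / (#(incidentEdges Hd Tl u) : ℝ) * ∑ i, ∑ j,
        if u ∈ Hd i ∪ Tl i ∧ u ∈ Hd j ∪ Tl j then
          ‖incB Hd Tl u i * y i - incB Hd Tl u j * y j‖ ^ 2
        else 0 := by
  have hloc (u : V) : (∑ i, ∑ j, if u ∈ Hd i ∪ Tl i ∧ u ∈ Hd j ∪ Tl j then
        ‖incB Hd Tl u i * y i - incB Hd Tl u j * y j‖ ^ 2 else 0) =
      ∑ i ∈ incidentEdges Hd Tl u, ∑ j ∈ incidentEdges Hd Tl u,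
        ‖incB Hd Tl u i * y i - incB Hd Tl u j * y j‖ ^ 2 := by
    simp only [incidentEdges, sum_filter, ite_and]
    exact sum_congr rfl fun i _ => by split_ifs <;> simp
  have hnorm : ∑ e, (edeg Hd Tl e : ℝ) * ‖y e‖ ^ 2 =
      ∑ u, ∑ e ∈ incidentEdges Hd Tl u, ‖incB Hd Tl u e * y e‖ ^ 2 := by
    simp only [← nsmul_eq_mul, ← sum_sum_incidentEdges]
    refine sum_congr rfl fun u _ => sum_congr rfl fun e he => ?_
    rw [norm_mul, norm_incB_apply Hd Tl (mem_filter.mp he).2, one_mul]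
  rw [hnorm, mul_sum, ← sum_sub_distrib]
  refine sum_congr rfl fun u _ => ?_
  rw [hloc, mulVec_incB_apply, one_div (#(incidentEdges Hd Tl u) : ℝ),
    inv_card_mul_sum_sum_norm_sub_sq _ fun e => incB Hd Tl u e * y e]
  ring

end Incidence

theorem stmt1_general {V E : Type*} [Fintype V] [Fintype E] [DecidableEq V] [DecidableEq E]
    (Hd Tl : E → Finset V)
    (hdisj : ∀ e, Disjoint (Hd e) (Tl e))
    (hne : ∀ e, (Hd e ∪ Tl e).Nonempty)
    (a b : E → ℝ) :
    star (fun e => (a e : ℂ) + (b e : ℂ) * Complex.I) ⬝ᵥ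
        (LN Hd Tl (fun _ => (1 : ℝ)) *ᵥ fun e => (a e : ℂ) + (b e : ℂ) * Complex.I) =
      (((1 / 2 : ℝ) * ∑ u : V, (1 / vdeg Hd Tl (fun _ => (1 : ℝ)) u) * ∑ i : E, ∑ j : E,
        ((if u ∈ Hd i ∩ Hd j ∨ u ∈ Tl i ∩ Tl j then
            (a i / Real.sqrt (edeg Hd Tl i : ℝ) - a j / Real.sqrt (edeg Hd Tl j : ℝ)) ^ 2 +
              (b i / Real.sqrt (edeg Hd Tl i : ℝ) - b j / Real.sqrt (edeg Hd Tl j : ℝ)) ^ 2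
          else 0) +
        (if u ∈ Hd i ∩ Tl j then
            (a i / Real.sqrt (edeg Hd Tl i : ℝ) - b j / Real.sqrt (edeg Hd Tl j : ℝ)) ^ 2 +
              (a j / Real.sqrt (edeg Hd Tl j : ℝ) + b i / Real.sqrt (edeg Hd Tl i : ℝ)) ^ 2
          else 0) +
        (if u ∈ Tl i ∩ Hd j then
            (a i / Real.sqrt (edeg Hd Tl i : ℝ) + b j / Real.sqrt (edeg Hd Tl j : ℝ)) ^ 2 +
              (a j / Real.sqrt (edeg Hd Tl j : ℝ) - b i / Real.sqrt (edeg Hd Tl i : ℝ)) ^ 2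
          else 0)) : ℝ) : ℂ) := by
  set y : E → ℂ := fun e =>
    ((a e / √(edeg Hd Tl e : ℝ) : ℝ) : ℂ) + ((b e / √(edeg Hd Tl e : ℝ) : ℝ) : ℂ) * Complex.I
  have hy : (fun e => ((√1 / √(edeg Hd Tl e : ℝ) : ℝ) : ℂ) * ((a e : ℂ) + b e * Complex.I)) = y := by
    funext e
    simp only [y, Real.sqrt_one]
    push_cast
    ring
  have hx (e : E) : ‖(a e : ℂ) + b e * Complex.I‖ ^ 2 = (edeg Hd Tl e : ℝ) * ‖y e‖ ^ 2 := by
    have hδ : (0 : ℝ) < edeg Hd Tl e := by exact_mod_cast (hne e).card_pos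
    simp only [y, Complex.sq_norm, Complex.normSq_add_mul_I, div_pow, Real.sq_sqrt hδ.le]
    field_simp
  rw [star_dotProduct_LN_mulVec, hy]
  simp only [pair_terms_eq_sq_norm_sub Hd Tl (hdisj _) (hdisj _), vdeg_one, hx]
  exact congrArg _ (sum_edeg_mul_sq_norm_sub_sum_inv_mul_sq_norm_mulVec_incB Hd Tl y)

/-- The quadratic form (Dirichlet energy) of `𝕃_N` with unit weights, for a complex
signal `x = a + i b`. -/
theorem stmt1 {V E : Type*} [Fintype V] [Fintype E] [DecidableEq V] [DecidableEq E]
    (Hd Tl : E → Finset V)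
    (hdisj : ∀ e, Disjoint (Hd e) (Tl e))
    (hne : ∀ e, (Hd e ∪ Tl e).Nonempty)
    (hd : ∀ u, 0 < vdeg Hd Tl (fun _ => (1 : ℝ)) u)
    (a b : E → ℝ) :
    star (fun e => (a e : ℂ) + (b e : ℂ) * Complex.I) ⬝ᵥ
        (LN Hd Tl (fun _ => (1 : ℝ)) *ᵥ fun e => (a e : ℂ) + (b e : ℂ) * Complex.I) =
      (((1 / 2 : ℝ) * ∑ u : V, (1 / vdeg Hd Tl (fun _ => (1 : ℝ)) u) * ∑ i : E, ∑ j : E,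
        ((if u ∈ Hd i ∩ Hd j ∨ u ∈ Tl i ∩ Tl j then
            (a i / Real.sqrt (edeg Hd Tl i : ℝ) - a j / Real.sqrt (edeg Hd Tl j : ℝ)) ^ 2 +
              (b i / Real.sqrt (edeg Hd Tl i : ℝ) - b j / Real.sqrt (edeg Hd Tl j : ℝ)) ^ 2
          else 0) +
        (if u ∈ Hd i ∩ Tl j then
            (a i / Real.sqrt (edeg Hd Tl i : ℝ) - b j / Real.sqrt (edeg Hd Tl j : ℝ)) ^ 2 +
              (a j / Real.sqrt (edeg Hd Tl j : ℝ) + b i / Real.sqrt (edeg Hd Tl i : ℝ)) ^ 2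
          else 0) +
        (if u ∈ Tl i ∩ Hd j then
            (a i / Real.sqrt (edeg Hd Tl i : ℝ) + b j / Real.sqrt (edeg Hd Tl j : ℝ)) ^ 2 +
              (a j / Real.sqrt (edeg Hd Tl j : ℝ) - b i / Real.sqrt (edeg Hd Tl i : ℝ)) ^ 2
          else 0)) : ℝ) : ℂ) :=
  stmt1_general Hd Tl hdisj hne a b
end

section
/- The Directed Line Graph Laplacian 𝕃_N is positive semidefinite: 𝕃_N is Hermitian and for every x ∈ ℂ^E the quadratic form x* 𝕃_N x is a nonnegative real number. -/
/-!
With `S = D_v^{-1/2} B W^{1/2} D_e^{-1/2}` one has `Q̄_N = S* S`, so `𝕃_N = I - S* S` is Hermitian,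
and it is positive semidefinite as soon as `S` is a contraction. That is the Schur test: for
`v ∈ e`, `|S(v,e)|² = (w(e) / d(v)) · (1 / δ(e))`, where the first factor sums to `1` over the
hyperedges at `v` and the second sums to `1` over the vertices of `e`.
-/

open Matrix Finset

variable {V E : Type*}

namespace Matrix

variable {m n 𝕜 : Type*} [Fintype m] [Fintype n] [RCLike 𝕜]

lemma star_dotProduct_self_eq_sum_norm_sq (v : n → 𝕜) :
    star v ⬝ᵥ v = ((∑ i, ‖v i‖ ^ 2 : ℝ) : 𝕜) := by
  simp only [dotProduct, Pi.star_apply, RCLike.star_def, RCLike.conj_mul, RCLike.ofReal_sum,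
    RCLike.ofReal_pow]

/-- The Schur test: Cauchy–Schwarz in each row against the weights `p`, then the column sums
of `q`. -/
theorem sum_norm_sq_mulVec_le_of_norm_sq_le_mul (A : Matrix m n 𝕜) (p q : m → n → ℝ)
    (hp : ∀ i j, 0 ≤ p i j) (hq : ∀ i j, 0 ≤ q i j) (hA : ∀ i j, ‖A i j‖ ^ 2 ≤ p i j * q i j)
    (hp_sum : ∀ i, ∑ j, p i j ≤ 1) (hq_sum : ∀ j, ∑ i, q i j ≤ 1) (x : n → 𝕜) :
    ∑ i, ‖(A *ᵥ x) i‖ ^ 2 ≤ ∑ j, ‖x j‖ ^ 2 := by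
  have hrow : ∀ i, ‖(A *ᵥ x) i‖ ^ 2 ≤ ∑ j, q i j * ‖x j‖ ^ 2 := by
    intro i
    have htri : ‖(A *ᵥ x) i‖ ≤ ∑ j, ‖A i j‖ * ‖x j‖ :=
      (norm_sum_le _ _).trans_eq (by simp only [norm_mul])
    have hCS : (∑ j, ‖A i j‖ * ‖x j‖) ^ 2 ≤ (∑ j, p i j) * ∑ j, q i j * ‖x j‖ ^ 2 :=
      sum_sq_le_sum_mul_sum_of_sq_le_mul _ (fun j _ => hp i j)
        (fun j _ => by have := hq i j; positivity)
        (fun j _ => by rw [mul_pow, ← mul_assoc]; gcongr; exact hA i j)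
    have hnonneg : 0 ≤ ∑ j, q i j * ‖x j‖ ^ 2 :=
      sum_nonneg fun j _ => by have := hq i j; positivity
    calc ‖(A *ᵥ x) i‖ ^ 2 ≤ (∑ j, ‖A i j‖ * ‖x j‖) ^ 2 := pow_le_pow_left₀ (norm_nonneg _) htri 2
      _ ≤ (∑ j, p i j) * ∑ j, q i j * ‖x j‖ ^ 2 := hCS
      _ ≤ ∑ j, q i j * ‖x j‖ ^ 2 := mul_le_of_le_one_left hnonneg (hp_sum i)
  calc ∑ i, ‖(A *ᵥ x) i‖ ^ 2 ≤ ∑ i, ∑ j, q i j * ‖x j‖ ^ 2 := sum_le_sum fun i _ => hrow i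
    _ = ∑ j, (∑ i, q i j) * ‖x j‖ ^ 2 := by rw [sum_comm]; simp only [sum_mul]
    _ ≤ ∑ j, ‖x j‖ ^ 2 := sum_le_sum fun j _ => mul_le_of_le_one_left (by positivity) (hq_sum j)

open scoped ComplexOrder in
theorem posSemidef_one_sub_conjTranspose_mul_self [DecidableEq n] (A : Matrix m n 𝕜)
    (hA : ∀ x, ∑ i, ‖(A *ᵥ x) i‖ ^ 2 ≤ ∑ j, ‖x j‖ ^ 2) : (1 - Aᴴ * A).PosSemidef := by
  refine posSemidef_iff_dotProduct_mulVec.mpr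
    ⟨isHermitian_one.sub (isHermitian_conjTranspose_mul_self A), fun x => ?_⟩
  rw [sub_mulVec, one_mulVec, dotProduct_sub, ← mulVec_mulVec, dotProduct_mulVec,
    ← star_mulVec, star_dotProduct_self_eq_sum_norm_sq, star_dotProduct_self_eq_sum_norm_sq,
    ← RCLike.ofReal_sub, RCLike.ofReal_nonneg, sub_nonneg]
  exact hA x

open scoped ComplexOrder in
lemma PosSemidef.exists_nonneg_dotProduct_mulVec_eq_ofReal {M : Matrix n n 𝕜} (hM : M.PosSemidef)
    (x : n → 𝕜) : ∃ r : ℝ, 0 ≤ r ∧ star x ⬝ᵥ (M *ᵥ x) = r := by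
  obtain ⟨r, hr, hrx⟩ := RCLike.nonneg_iff_exists_ofReal.mp (hM.dotProduct_mulVec_nonneg x)
  exact ⟨r, hr, hrx.symm⟩

end Matrix

/-- `S = D_v^{-1/2} B W^{1/2} D_e^{-1/2}`. -/
noncomputable def normIncB [Fintype E] [DecidableEq V] (Hd Tl : E → Finset V) (w : E → ℝ) :
    Matrix V E ℂ :=
  Matrix.of fun v e =>
    (((Real.sqrt (vdeg Hd Tl w v))⁻¹ * Real.sqrt (w e) * (Real.sqrt (edeg Hd Tl e : ℝ))⁻¹ : ℝ)
      : ℂ) * incB Hd Tl v e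

lemma QN_eq_conjTranspose_mul_self [Fintype V] [Fintype E] [DecidableEq V] [DecidableEq E]
    (Hd Tl : E → Finset V) (w : E → ℝ) (hd : ∀ u, 0 ≤ vdeg Hd Tl w u) :
    QN Hd Tl w = (normIncB Hd Tl w)ᴴ * normIncB Hd Tl w := by
  ext e f
  simp only [QN, normIncB, mul_apply, diagonal_apply, conjTranspose_apply, of_apply, mul_ite,
    ite_mul, mul_zero, zero_mul, sum_ite_eq, sum_ite_eq', mem_univ, if_true, sum_mul, star_mul',
    RCLike.star_def, Complex.conj_ofReal]
  refine sum_congr rfl fun v _ => ?_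
  have hv : ((vdeg Hd Tl w v : ℂ))⁻¹ = ((Real.sqrt (vdeg Hd Tl w v) : ℂ))⁻¹ ^ 2 := by
    rw [inv_pow, ← Complex.ofReal_pow, Real.sq_sqrt (hd v)]
  push_cast
  rw [hv]
  ring

lemma norm_incB_sq [DecidableEq V] (Hd Tl : E → Finset V) (v : V) (e : E) :
    ‖incB Hd Tl v e‖ ^ 2 = if v ∈ Hd e ∪ Tl e then 1 else 0 := by
  simp only [incB, of_apply, mem_union]
  split_ifs <;> simp_all

lemma norm_normIncB_sq [Fintype E] [DecidableEq V] (Hd Tl : E → Finset V) (w : E → ℝ)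
    (hw : ∀ e, 0 ≤ w e)
    (hd : ∀ u, 0 ≤ vdeg Hd Tl w u) (v : V) (e : E) :
    ‖normIncB Hd Tl w v e‖ ^ 2 =
      (if v ∈ Hd e ∪ Tl e then w e / vdeg Hd Tl w v else 0) *
        (if v ∈ Hd e ∪ Tl e then (edeg Hd Tl e : ℝ)⁻¹ else 0) := by
  rw [normIncB, of_apply, norm_mul, mul_pow, norm_incB_sq, Complex.norm_real, Real.norm_eq_abs,
    sq_abs, mul_pow, mul_pow, inv_pow, inv_pow, Real.sq_sqrt (hd v), Real.sq_sqrt (hw e),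
    Real.sq_sqrt (Nat.cast_nonneg _)]
  split_ifs <;> ring

lemma sum_norm_sq_normIncB_mulVec_le [Fintype V] [Fintype E] [DecidableEq V]
    (Hd Tl : E → Finset V)
    (hne : ∀ e, (Hd e ∪ Tl e).Nonempty) (w : E → ℝ) (hw : ∀ e, 0 ≤ w e)
    (hd : ∀ u, 0 < vdeg Hd Tl w u) (x : E → ℂ) :
    ∑ v, ‖(normIncB Hd Tl w *ᵥ x) v‖ ^ 2 ≤ ∑ e, ‖x e‖ ^ 2 := by
  refine sum_norm_sq_mulVec_le_of_norm_sq_le_mul _ _ _ (fun v e => ?_) (fun v e => ?_)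
    (fun v e => (norm_normIncB_sq Hd Tl w hw (fun u => (hd u).le) v e).le) (fun v => ?_)
    (fun e => ?_) x
  · have := hw e; have := hd v; split_ifs <;> positivity
  · split_ifs <;> positivity
  · rw [← sum_filter, ← sum_div]
    exact (div_self (hd v).ne').le
  · have hcard : (edeg Hd Tl e : ℝ) ≠ 0 := Nat.cast_ne_zero.mpr (card_pos.mpr (hne e)).ne'
    rw [← sum_filter, sum_const, nsmul_eq_mul, filter_mem_eq_inter, univ_inter, ← edeg,
      mul_inv_cancel₀ hcard]

open scoped ComplexOrder in
theorem LN_posSemidef [Fintype V] [Fintype E] [DecidableEq V] [DecidableEq E]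
    (Hd Tl : E → Finset V) (hne : ∀ e, (Hd e ∪ Tl e).Nonempty) (w : E → ℝ) (hw : ∀ e, 0 ≤ w e)
    (hd : ∀ u, 0 < vdeg Hd Tl w u) : (LN Hd Tl w).PosSemidef := by
  rw [LN, QN_eq_conjTranspose_mul_self Hd Tl w fun u => (hd u).le]
  exact posSemidef_one_sub_conjTranspose_mul_self _
    (sum_norm_sq_normIncB_mulVec_le Hd Tl hne w hw hd)

theorem stmt2_general {V E : Type*} [Fintype V] [Fintype E] [DecidableEq V] [DecidableEq E]
    (Hd Tl : E → Finset V)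
    (hne : ∀ e, (Hd e ∪ Tl e).Nonempty)
    (w : E → ℝ) (hw : ∀ e, 0 < w e)
    (hd : ∀ u, 0 < vdeg Hd Tl w u) :
    (LN Hd Tl w).IsHermitian ∧
      ∀ x : E → ℂ, ∃ r : ℝ, 0 ≤ r ∧ star x ⬝ᵥ (LN Hd Tl w *ᵥ x) = (r : ℂ) := by
  open scoped ComplexOrder in
  have hpsd := LN_posSemidef Hd Tl hne w (fun e => (hw e).le) hd
  exact ⟨hpsd.isHermitian, hpsd.exists_nonneg_dotProduct_mulVec_eq_ofReal⟩

/-- The Directed Line Graph Laplacian `𝕃_N` is positive semidefinite: it is Hermitian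
and every quadratic form `x* 𝕃_N x` is a nonnegative real number. -/
theorem stmt2 {V E : Type*} [Fintype V] [Fintype E] [DecidableEq V] [DecidableEq E]
    (Hd Tl : E → Finset V)
    (hdisj : ∀ e, Disjoint (Hd e) (Tl e))
    (hne : ∀ e, (Hd e ∪ Tl e).Nonempty)
    (w : E → ℝ) (hw : ∀ e, 0 < w e)
    (hd : ∀ u, 0 < vdeg Hd Tl w u) :
    (LN Hd Tl w).IsHermitian ∧
      ∀ x : E → ℂ, ∃ r : ℝ, 0 ≤ r ∧ star x ⬝ᵥ (LN Hd Tl w *ᵥ x) = (r : ℂ) :=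
  stmt2_general Hd Tl hne w hw hd
end

section
/- Every eigenvalue of the Hermitian matrix 𝕃_N is at most 1; equivalently, the matrix I − 𝕃_N is positive semidefinite. -/
open Matrix Finset
open scoped ComplexOrder

variable {V E : Type*}

/-! `Q̄_N = Mᴴ D_v⁻¹ M` with `M = B W^{1/2} D_e^{-1/2}` is a congruence of the nonnegative diagonal
`D_v⁻¹`, hence positive semidefinite; so the spectrum of `𝕃_N = I - Q̄_N` is real and at most `1`. -/

namespace Matrix

variable {𝕜 n : Type*} [RCLike 𝕜]

lemma isHermitian_diagonal_ofReal [DecidableEq n] (d : n → ℝ) :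
    (diagonal fun i => (d i : 𝕜)).IsHermitian :=
  isHermitian_diagonal_iff.mpr fun i => RCLike.conj_ofReal (d i)

lemma PosSemidef.mul_mul_same_of_isHermitian {R : Type*} [Ring R] [PartialOrder R] [StarRing R]
    [Fintype n] {A D : Matrix n n R} (hA : A.PosSemidef) (hD : D.IsHermitian) :
    (D * A * D).PosSemidef := by
  simpa only [hD.eq] using hA.conjTranspose_mul_mul_same D

lemma PosSemidef.exists_real_le_one_of_mem_spectrum_one_sub [Fintype n] [DecidableEq n]
    {A : Matrix n n 𝕜} (hA : A.PosSemidef) {μ : 𝕜} (hμ : μ ∈ spectrum 𝕜 (1 - A)) :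
    ∃ r : ℝ, μ = (r : 𝕜) ∧ r ≤ 1 := by
  rw [← map_one (algebraMap 𝕜 (Matrix n n 𝕜)), ← spectrum.singleton_sub_eq] at hμ
  obtain ⟨_, rfl, ν, hν, rfl⟩ := hμ
  obtain ⟨x, hx, hxν⟩ := RCLike.nonneg_iff_exists_ofReal.mp
    ((posSemidef_iff_isHermitian_and_spectrum_nonneg.mp hA).2 hν)
  exact ⟨1 - x, by rw [← hxν]; push_cast; ring, by linarith⟩

end Matrix

lemma QN_posSemidef [Fintype V] [Fintype E] [DecidableEq V] [DecidableEq E]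
    (Hd Tl : E → Finset V) (w : E → ℝ) (hd : ∀ u, 0 ≤ vdeg Hd Tl w u) :
    (QN Hd Tl w).PosSemidef := by
  have hDv : (diagonal fun u => (((vdeg Hd Tl w u)⁻¹ : ℝ) : ℂ)).PosSemidef :=
    posSemidef_diagonal_iff.mpr fun u => RCLike.ofReal_nonneg.mpr (inv_nonneg.mpr (hd u))
  have hQ := ((hDv.conjTranspose_mul_mul_same (incB Hd Tl)).mul_mul_same_of_isHermitian
    (isHermitian_diagonal_ofReal fun e => √(w e))).mul_mul_same_of_isHermitian
    (isHermitian_diagonal_ofReal fun e => (√(edeg Hd Tl e : ℝ))⁻¹)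
  simp only [QN, Matrix.mul_assoc] at hQ ⊢
  exact hQ

theorem stmt4_general {V E : Type*} [Fintype V] [Fintype E] [DecidableEq V] [DecidableEq E]
    (Hd Tl : E → Finset V)
    (w : E → ℝ)
    (hd : ∀ u, 0 < vdeg Hd Tl w u) :
    (∀ μ ∈ spectrum ℂ (LN Hd Tl w), ∃ r : ℝ, μ = (r : ℂ) ∧ r ≤ 1) ∧
      ((1 : Matrix E E ℂ) - LN Hd Tl w).PosSemidef := by
  have hQ := QN_posSemidef Hd Tl w fun u => (hd u).le
  have hLN : 1 - LN Hd Tl w = QN Hd Tl w := sub_sub_cancel 1 _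
  exact ⟨fun μ hμ => hQ.exists_real_le_one_of_mem_spectrum_one_sub hμ, hLN ▸ hQ⟩

/-- Every eigenvalue of the Hermitian matrix `𝕃_N` is (a real number) at most 1;
equivalently, `I - 𝕃_N` is positive semidefinite. -/
theorem stmt4 {V E : Type*} [Fintype V] [Fintype E] [DecidableEq V] [DecidableEq E]
    (Hd Tl : E → Finset V)
    (hdisj : ∀ e, Disjoint (Hd e) (Tl e))
    (hne : ∀ e, (Hd e ∪ Tl e).Nonempty)
    (w : E → ℝ) (hw : ∀ e, 0 < w e)
    (hd : ∀ u, 0 < vdeg Hd Tl w u) :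
    (∀ μ ∈ spectrum ℂ (LN Hd Tl w), ∃ r : ℝ, μ = (r : ℂ) ∧ r ≤ 1) ∧
      ((1 : Matrix E E ℂ) - LN Hd Tl w).PosSemidef :=
  stmt4_general Hd Tl w hd
end

section
/- For all distinct hyperedges i, j ∈ E, the off-diagonal entry of the Directed Line Graph Laplacian is given in scalar form by 𝕃_N(i,j) = (√(w(i))·√(w(j))/(√δ(i)·√δ(j))) · [ −Σ_{u ∈ (H(i)∩H(j)) ∪ (T(i)∩T(j))} 1/d(u) + i·( Σ_{u ∈ H(i)∩T(j)} 1/d(u) − Σ_{u ∈ T(i)∩H(j)} 1/d(u) ) ]. -/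
open Matrix Finset

variable {V E : Type*}

section DiagonalSandwich

variable {R : Type*} [CommRing R] [StarRing R] [Fintype V] [Fintype E] [DecidableEq V]
  [DecidableEq E]

theorem diagonal_mul_conjTranspose_mul_diagonal_mul_apply (A : Matrix V E R) (a b : E → R)
    (c : V → R) (i j : E) :
    (diagonal a * diagonal b * Aᴴ * diagonal c * A * diagonal b * diagonal a) i j =
      a i * b i * (∑ u, star (A u i) * c u * A u j) * b j * a j := by
  rw [mul_diagonal, mul_diagonal, mul_apply]
  simp only [diagonal_mul_diagonal, diagonal_mul, mul_diagonal, conjTranspose_apply,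
    Finset.mul_sum, Finset.sum_mul]
  exact Finset.sum_congr rfl fun u _ => by ring

end DiagonalSandwich

section IncidenceMatrix

variable [DecidableEq V] {Hd Tl : E → Finset V} {i j : E}

theorem star_incB_mul_incB (hi : Disjoint (Hd i) (Tl i)) (hj : Disjoint (Hd j) (Tl j)) (u : V) :
    star (incB Hd Tl u i) * incB Hd Tl u j =
      (if u ∈ (Hd i ∩ Hd j) ∪ (Tl i ∩ Tl j) then 1 else 0)
        - Complex.I * (if u ∈ Hd i ∩ Tl j then 1 else 0)
        + Complex.I * (if u ∈ Tl i ∩ Hd j then 1 else 0) := by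
  have hi' := Finset.disjoint_left.mp hi
  have hj' := Finset.disjoint_left.mp hj
  simp only [incB, of_apply, mem_union, mem_inter]
  by_cases hHi : u ∈ Hd i <;> by_cases hTi : u ∈ Tl i <;>
    by_cases hHj : u ∈ Hd j <;> by_cases hTj : u ∈ Tl j <;>
    simp_all

theorem sum_star_incB_mul_incB [Fintype V] (hi : Disjoint (Hd i) (Tl i))
    (hj : Disjoint (Hd j) (Tl j)) (c : V → ℂ) :
    ∑ u, star (incB Hd Tl u i) * c u * incB Hd Tl u j =
      ∑ u ∈ (Hd i ∩ Hd j) ∪ (Tl i ∩ Tl j), c u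
        - Complex.I * ∑ u ∈ Hd i ∩ Tl j, c u + Complex.I * ∑ u ∈ Tl i ∩ Hd j, c u := by
  simp only [mul_right_comm _ (c _), star_incB_mul_incB hi hj, add_mul, sub_mul, mul_assoc,
    ite_mul, one_mul, zero_mul, Finset.sum_add_distrib, Finset.sum_sub_distrib, ← Finset.mul_sum,
    Finset.sum_ite_mem, Finset.univ_inter]

end IncidenceMatrix

theorem LN_apply_of_ne [Fintype V] [Fintype E] [DecidableEq V] [DecidableEq E]
    (Hd Tl : E → Finset V) (w : E → ℝ) {i j : E} (hij : i ≠ j) :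
    LN Hd Tl w i j = -QN Hd Tl w i j := by
  simp [LN, one_apply_ne hij]

theorem stmt10_general {V E : Type*} [Fintype V] [Fintype E] [DecidableEq V] [DecidableEq E]
    (Hd Tl : E → Finset V)
    (hdisj : ∀ e, Disjoint (Hd e) (Tl e))
    (w : E → ℝ)
    (i j : E) (hij : i ≠ j) :
    LN Hd Tl w i j =
      ((Real.sqrt (w i) * Real.sqrt (w j) /
          (Real.sqrt (edeg Hd Tl i : ℝ) * Real.sqrt (edeg Hd Tl j : ℝ)) : ℝ) : ℂ) *
        (-((∑ u ∈ (Hd i ∩ Hd j) ∪ (Tl i ∩ Tl j), 1 / vdeg Hd Tl w u : ℝ) : ℂ) +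
          Complex.I *
            (((∑ u ∈ Hd i ∩ Tl j, 1 / vdeg Hd Tl w u) -
              ∑ u ∈ Tl i ∩ Hd j, 1 / vdeg Hd Tl w u : ℝ) : ℂ)) := by
  rw [LN_apply_of_ne Hd Tl w hij, QN, diagonal_mul_conjTranspose_mul_diagonal_mul_apply,
    sum_star_incB_mul_incB (hdisj i) (hdisj j)]
  push_cast
  simp only [one_div]
  ring

/-- The off-diagonal entries of the Directed Line Graph Laplacian in scalar form. -/
theorem stmt10 {V E : Type*} [Fintype V] [Fintype E] [DecidableEq V] [DecidableEq E]
    (Hd Tl : E → Finset V)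
    (hdisj : ∀ e, Disjoint (Hd e) (Tl e))
    (hne : ∀ e, (Hd e ∪ Tl e).Nonempty)
    (w : E → ℝ) (hw : ∀ e, 0 < w e)
    (hd : ∀ u, 0 < vdeg Hd Tl w u)
    (i j : E) (hij : i ≠ j) :
    LN Hd Tl w i j =
      ((Real.sqrt (w i) * Real.sqrt (w j) /
          (Real.sqrt (edeg Hd Tl i : ℝ) * Real.sqrt (edeg Hd Tl j : ℝ)) : ℝ) : ℂ) *
        (-((∑ u ∈ (Hd i ∩ Hd j) ∪ (Tl i ∩ Tl j), 1 / vdeg Hd Tl w u : ℝ) : ℂ) +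
          Complex.I *
            (((∑ u ∈ Hd i ∩ Tl j, 1 / vdeg Hd Tl w u) -
              ∑ u ∈ Tl i ∩ Hd j, 1 / vdeg Hd Tl w u : ℝ) : ℂ)) :=
  stmt10_general Hd Tl hdisj w i j hij
end
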